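/- arXiv:1801.00771 — 6 statements merged into one kernel-verified Lean document; each statement's English description precedes it below -/
import Mathlib

section
/- For every integer i ≥ 1, the p-adic absolute value of i! satisfies ω^i ≤ |i!|_p ≤ i·ω^{i-(p-1)}, where ω = p^{-1/(p-1)}. -/
/-! Legendre's formula `(p - 1) v_p(i!) = i - s_p(i)`, with `s_p` the base-`p` digit sum, says
exactly that `|i!|_p = ω ^ (i - s_p(i))`. As `ω ≤ 1`, the lower bound is `s_p(i) ≥ 0`; the upper
bound is `s_p(i) ≤ (p - 1)(log_p i + 1)`, each of the `log_p i + 1` digits being at most `p - 1`,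
together with `p ^ log_p i ≤ i`. -/

open Real

theorem rpow_neg_one_div_sub_one_rpow_sub_one_mul {b : ℝ} (hb : 1 < b) (x : ℝ) :
    (b ^ (-1 / (b - 1))) ^ ((b - 1) * x) = b ^ (-x) := by
  rw [← rpow_mul (by linarith)]
  congr 1
  field_simp [(by linarith : b - 1 ≠ 0)]

theorem rpow_neg_one_div_sub_one_le_one {b : ℝ} (hb : 1 < b) : b ^ (-1 / (b - 1)) ≤ 1 :=
  rpow_le_one_of_one_le_of_nonpos hb.le (div_nonpos_of_nonpos_of_nonneg (by norm_num) (by linarith))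

theorem padicNorm_natCast_eq_rpow (p : ℕ) [Fact p.Prime] {n : ℕ} (hn : n ≠ 0) :
    (padicNorm p n : ℝ) = (p : ℝ) ^ (-(padicValNat p n : ℝ)) := by
  rw [padicNorm.eq_zpow_of_nonzero (Nat.cast_ne_zero.mpr hn), padicValRat.of_nat, Rat.cast_zpow,
    Rat.cast_natCast, ← rpow_intCast, Int.cast_neg, Int.cast_natCast]

theorem padicNorm_factorial_eq_rpow (p : ℕ) [hp : Fact p.Prime] (n : ℕ) :
    (padicNorm p n.factorial : ℝ) =
      ((p : ℝ) ^ (-1 / ((p : ℝ) - 1))) ^ ((n : ℝ) - (p.digits n).sum) := by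
  have legendre : ((p : ℝ) - 1) * padicValNat p n.factorial = n - (p.digits n).sum := by
    rw [← Nat.cast_sub (Nat.digit_sum_le p n), ← sub_one_mul_padicValNat_factorial,
      Nat.cast_mul, Nat.cast_pred hp.out.pos]
  rw [padicNorm_natCast_eq_rpow p n.factorial_ne_zero, ← legendre,
    rpow_neg_one_div_sub_one_rpow_sub_one_mul (by exact_mod_cast hp.out.one_lt)]

theorem Nat.sum_digits_le_sub_one_mul_log_add_one {b : ℕ} (hb : 1 < b) (n : ℕ) :
    (b.digits n).sum ≤ (b - 1) * (Nat.log b n + 1) := by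
  rcases eq_or_ne n 0 with rfl | hn
  · simp
  rw [← Nat.length_digits b n hb hn, mul_comm, ← smul_eq_mul]
  exact List.sum_le_card_nsmul _ _ fun d hd => Nat.le_sub_one_of_lt (Nat.digits_lt_base hb hd)

theorem rpow_sub_one_sub_sum_digits_le {p : ℕ} (hp : 1 < p) {n : ℕ} (hn : n ≠ 0) :
    ((p : ℝ) ^ (-1 / ((p : ℝ) - 1))) ^ (((p : ℝ) - 1) - (p.digits n).sum) ≤ n := by
  have hp' : (1 : ℝ) < p := by exact_mod_cast hp
  have hω0 : 0 < (p : ℝ) ^ (-1 / ((p : ℝ) - 1)) := rpow_pos_of_pos (by linarith) _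
  have hsum : ((p.digits n).sum : ℝ) ≤ ((p : ℝ) - 1) * (Nat.log p n + 1) := by
    have := Nat.cast_le (α := ℝ).mpr (Nat.sum_digits_le_sub_one_mul_log_add_one hp n)
    rwa [Nat.cast_mul, Nat.cast_sub hp.le, Nat.cast_one, Nat.cast_add_one] at this
  calc _ ≤ ((p : ℝ) ^ (-1 / ((p : ℝ) - 1))) ^ (((p : ℝ) - 1) * -(Nat.log p n : ℝ)) :=
        rpow_le_rpow_of_exponent_ge hω0 (rpow_neg_one_div_sub_one_le_one hp') (by linarith)
    _ = (p : ℝ) ^ (Nat.log p n) := by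
        rw [rpow_neg_one_div_sub_one_rpow_sub_one_mul hp', neg_neg, rpow_natCast]
    _ ≤ n := by exact_mod_cast Nat.pow_log_le_self p hn

/-- For every integer `i ≥ 1` and prime `p`, with `ω = p^(-1/(p-1))`,
the `p`-adic absolute value of `i!` satisfies `ω^i ≤ |i!|_p ≤ i·ω^(i-(p-1))`. -/
theorem padicNorm_factorial_bounds (p : ℕ) (hp : p.Prime) (i : ℕ) (hi : 1 ≤ i) :
    let ω : ℝ := (p : ℝ) ^ (-(1 : ℝ) / (p - 1))
    ω ^ i ≤ (padicNorm p (Nat.factorial i) : ℝ) ∧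
    (padicNorm p (Nat.factorial i) : ℝ) ≤ (i : ℝ) * ω ^ ((i : ℝ) - (p - 1)) := by
  intro ω
  have : Fact p.Prime := ⟨hp⟩
  have hp' : (1 : ℝ) < p := by exact_mod_cast hp.one_lt
  have hω0 : 0 < ω := rpow_pos_of_pos (by linarith) _
  have hω1 : ω ≤ 1 := rpow_neg_one_div_sub_one_le_one hp'
  rw [padicNorm_factorial_eq_rpow]
  constructor
  · rw [← rpow_natCast]
    exact rpow_le_rpow_of_exponent_ge hω0 hω1 (sub_le_self _ (Nat.cast_nonneg _))
  · calc ω ^ ((i : ℝ) - (p.digits i).sum)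
        = ω ^ (((p : ℝ) - 1) - (p.digits i).sum) * ω ^ ((i : ℝ) - (p - 1)) := by
          rw [← rpow_add hω0]; ring_nf
      _ ≤ i * ω ^ ((i : ℝ) - (p - 1)) :=
          mul_le_mul_of_nonneg_right (rpow_sub_one_sub_sum_digits_le hp.one_lt (by omega))
            (rpow_nonneg hω0.le _)
end

section
/- Let p be an odd prime and K a complete discretely valued field of mixed characteristic (0,p). Every nonzero K-linear combination h = d₁·b + d₂·c of b = ∑ ((-1)^i/(2^i i!)) t^{2i} and c = ∑ ((-1)^i/(2i+1)!!) t^{2i+1} has p-adic radius of convergence exactly ω^{1/2} = p^{-1/(2(p-1))}. -/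
/-!
Since `2 ^ i * i ! = (2 * i)‼`, the coefficient of `t ^ n` in `d₁ • b + d₂ • c` has absolute
value `‖dⱼ‖ * p ^ v_p(n‼)`. Put `r = ω ^ (-1/2)`, so that `r ^ (2 * (p - 1)) = p`.
Legendre's formula `(p - 1) * v_p(i !) = i - s_p(i)` gives `p ^ v_p((2i)‼) = p ^ v_p(i !) ≤ r ^ (2i)`,
and `(2i+1)! = (2i+1) * C(2i, i) * i ! ^ 2` with `p ^ v_p(C(2i, i)) ≤ 2i` gives
`p ^ v_p((2i+1)‼) ≤ (2i+1) ^ 2 * r ^ (2i)`; hence the terms tend to zero for `ρ < r⁻¹`.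
At `n = p ^ k` Legendre's formula reads `(p - 1) * v_p(n !) = n - 1`, which makes the coefficients
of index `2 * p ^ k` (if `d₁ ≠ 0`) or `p ^ k` (if `d₂ ≠ 0`) at least a constant times `r ^ n`,
so the terms do not tend to zero for `ρ > r⁻¹`.
-/

open Filter Nat

section Valuations

variable {p : ℕ} [hp : Fact p.Prime]

theorem padicValNat_two_pow_mul (hp2 : p ≠ 2) (i : ℕ) {n : ℕ} (hn : n ≠ 0) :
    padicValNat p (2 ^ i * n) = padicValNat p n := by
  have hndvd : ¬ p ∣ 2 ^ i := fun h =>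
    hp2 ((Nat.prime_dvd_prime_iff_eq hp.out Nat.prime_two).mp (hp.out.dvd_of_dvd_pow h))
  rw [padicValNat.mul (by positivity) hn, padicValNat.eq_zero_of_not_dvd hndvd, zero_add]

theorem padicValNat_doubleFactorial_two_mul (hp2 : p ≠ 2) (i : ℕ) :
    padicValNat p (2 * i)‼ = padicValNat p i ! := by
  rw [doubleFactorial_two_mul, padicValNat_two_pow_mul hp2 i (factorial_ne_zero i)]

theorem padicValNat_doubleFactorial_add_padicValNat_factorial (hp2 : p ≠ 2) (i : ℕ) :
    padicValNat p (2 * i + 1)‼ + padicValNat p i ! = padicValNat p (2 * i + 1)! := by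
  rw [factorial_eq_mul_doubleFactorial, padicValNat.mul (doubleFactorial_pos _).ne'
    (doubleFactorial_pos _).ne', padicValNat_doubleFactorial_two_mul hp2]

theorem padicValNat_factorial_two_mul_add_one (i : ℕ) :
    padicValNat p (2 * i + 1)! =
      padicValNat p (2 * i + 1) + padicValNat p ((2 * i).choose i) + 2 * padicValNat p i ! := by
  have hchoose : (2 * i).choose i * i ! * i ! = (2 * i)! := by
    simpa [show 2 * i - i = i by omega] using
      Nat.choose_mul_factorial_mul_factorial (show i ≤ 2 * i by omega)
  have hchoose_pos : (2 * i).choose i ≠ 0 := (Nat.choose_pos (by omega)).ne'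
  rw [factorial_succ, ← hchoose, padicValNat.mul (by omega) (by positivity),
    padicValNat.mul (mul_ne_zero hchoose_pos (factorial_ne_zero i)) (factorial_ne_zero i),
    padicValNat.mul hchoose_pos (factorial_ne_zero i)]
  ring

theorem pow_padicValNat_doubleFactorial_two_mul_add_one_le (hp2 : p ≠ 2) (i : ℕ) :
    p ^ padicValNat p (2 * i + 1)‼ ≤ (2 * i + 1) ^ 2 * p ^ padicValNat p i ! := by
  have hval : padicValNat p (2 * i + 1)‼ =
      padicValNat p (2 * i + 1) + padicValNat p ((2 * i).choose i) + padicValNat p i ! := by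
    have := padicValNat_doubleFactorial_add_padicValNat_factorial hp2 i
    have := padicValNat_factorial_two_mul_add_one (p := p) i
    omega
  have hodd : p ^ padicValNat p (2 * i + 1) ≤ 2 * i + 1 :=
    Nat.le_of_dvd (by omega) pow_padicValNat_dvd
  have hchoose : p ^ padicValNat p ((2 * i).choose i) ≤ 2 * i + 1 := by
    rcases Nat.eq_zero_or_pos i with rfl | hi
    · simp
    · have := Nat.pow_factorization_choose_le (p := p) (k := i) (show 0 < 2 * i by omega)
      rw [Nat.factorization_def _ hp.out] at this
      omega
  rw [hval, pow_add, pow_add, sq]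
  gcongr

theorem sub_one_mul_padicValNat_factorial_prime_pow (k : ℕ) :
    (p - 1) * padicValNat p (p ^ k)! + 1 = p ^ k := by
  have hdigits : p.digits (p ^ k) = List.replicate k 0 ++ [1] := by
    simpa [Nat.digits_of_lt p 1 one_ne_zero hp.out.one_lt] using
      Nat.digits_base_pow_mul (k := k) (m := 1) hp.out.one_lt one_pos
  rw [sub_one_mul_padicValNat_factorial, hdigits]
  simp only [List.sum_append, List.sum_replicate, smul_zero, List.sum_singleton, zero_add]
  exact Nat.sub_add_cancel (Nat.one_le_pow _ _ hp.out.pos)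

end Valuations

section Growth

variable {p : ℕ} [hp : Fact p.Prime] {r : ℝ}

theorem pow_padicValNat_factorial_le (hr : 1 < r) (hrp : r ^ (2 * (p - 1)) = p) (i : ℕ) :
    (p : ℝ) ^ padicValNat p i ! ≤ r ^ (2 * i) := by
  rw [← hrp, ← pow_mul]
  have := sub_one_mul_padicValNat_factorial (p := p) i
  exact pow_le_pow_right₀ hr.le (by rw [mul_assoc, this]; omega)

theorem pow_padicValNat_doubleFactorial_le (hp2 : p ≠ 2) (hr : 1 < r)
    (hrp : r ^ (2 * (p - 1)) = p) {n : ℕ} (hn : n ≠ 0) :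
    (p : ℝ) ^ padicValNat p n‼ ≤ n ^ 2 * r ^ n := by
  obtain ⟨i, rfl | rfl⟩ := Nat.even_or_odd' n
  · rw [padicValNat_doubleFactorial_two_mul hp2]
    calc (p : ℝ) ^ padicValNat p i ! ≤ r ^ (2 * i) := pow_padicValNat_factorial_le hr hrp i
      _ ≤ ((2 * i : ℕ) : ℝ) ^ 2 * r ^ (2 * i) := by
        refine le_mul_of_one_le_left (by positivity) (one_le_pow₀ ?_)
        exact_mod_cast Nat.one_le_iff_ne_zero.mpr hn
  · calc (p : ℝ) ^ padicValNat p (2 * i + 1)‼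
        ≤ ((2 * i + 1) ^ 2 * p ^ padicValNat p i ! : ℕ) := by
          exact_mod_cast pow_padicValNat_doubleFactorial_two_mul_add_one_le hp2 i
      _ ≤ ((2 * i + 1 : ℕ) : ℝ) ^ 2 * r ^ (2 * i + 1) := by
        push_cast
        gcongr
        exact (pow_padicValNat_factorial_le hr hrp i).trans (pow_le_pow_right₀ hr.le (by omega))

theorem pow_two_mul_prime_pow_eq (hp2 : p ≠ 2) (hrp : r ^ (2 * (p - 1)) = p) (k : ℕ) :
    r ^ (2 * p ^ k) = r ^ 2 * (p : ℝ) ^ padicValNat p (2 * p ^ k)‼ := by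
  have hfac := sub_one_mul_padicValNat_factorial_prime_pow (p := p) k
  rw [padicValNat_doubleFactorial_two_mul hp2, ← hrp, ← pow_mul, ← pow_add]
  congr 1
  linarith

theorem pow_prime_pow_le (hp2 : p ≠ 2) (hr : 1 < r) (hrp : r ^ (2 * (p - 1)) = p) (k : ℕ) :
    r ^ p ^ k ≤ r * (p : ℝ) ^ padicValNat p (p ^ k)‼ := by
  obtain ⟨m, hm⟩ := (hp.out.odd_of_ne_two hp2).pow (n := k)
  have hfac := sub_one_mul_padicValNat_factorial_prime_pow (p := p) k
  have hsum := padicValNat_doubleFactorial_add_padicValNat_factorial hp2 m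
  have hm_fac := sub_one_mul_padicValNat_factorial (p := p) m
  rw [hm] at hfac ⊢
  rw [← hsum, mul_add] at hfac
  have hm_le : (p - 1) * padicValNat p m ! ≤ m := hm_fac ▸ Nat.sub_le _ _
  rw [← hrp, ← pow_mul, pow_succ' r (2 * m)]
  exact mul_le_mul_of_nonneg_left (pow_le_pow_right₀ hr.le (by nlinarith)) (by positivity)

end Growth

section Coefficients

-- `bCoeff`, `cCoeff` and `combination` unfold to the `bcoef`, `ccoef` and `a` of the statement.
def bCoeff (n : ℕ) : ℚ :=
  if n % 2 = 0 then (-1) ^ (n / 2) / (2 ^ (n / 2) * Nat.factorial (n / 2)) else 0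

def cCoeff (n : ℕ) : ℚ :=
  if n % 2 = 1 then (-1) ^ (n / 2) / (∏ j ∈ Finset.range (n / 2 + 1), (2 * j + 1) : ℕ) else 0

theorem prod_range_two_mul_add_one_eq_doubleFactorial (i : ℕ) :
    ∏ j ∈ Finset.range (i + 1), (2 * j + 1) = (2 * i + 1)‼ := by
  rw [Finset.prod_range_succ', doubleFactorial_eq_prod_odd, mul_zero, zero_add, mul_one]

theorem bCoeff_two_mul (i : ℕ) : bCoeff (2 * i) = (-1) ^ i / ((2 * i)‼ : ℕ) := by
  simp [bCoeff, doubleFactorial_two_mul]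

theorem bCoeff_two_mul_add_one (i : ℕ) : bCoeff (2 * i + 1) = 0 := by
  simp [bCoeff]

theorem cCoeff_two_mul (i : ℕ) : cCoeff (2 * i) = 0 := by
  simp [cCoeff]

theorem cCoeff_two_mul_add_one (i : ℕ) :
    cCoeff (2 * i + 1) = (-1) ^ i / ((2 * i + 1)‼ : ℕ) := by
  simp [cCoeff, show (2 * i + 1) / 2 = i by omega, prod_range_two_mul_add_one_eq_doubleFactorial]

theorem padicNorm_neg_one_pow_div_natCast (p : ℕ) [Fact p.Prime] (i : ℕ) {m : ℕ} (hm : m ≠ 0) :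
    padicNorm p ((-1) ^ i / m) = (p : ℚ) ^ padicValNat p m := by
  have hunit : padicNorm p ((-1) ^ i) = 1 := by
    rcases neg_one_pow_eq_or ℚ i with h | h <;> simp [h]
  rw [padicNorm.div, hunit, padicNorm.eq_zpow_of_nonzero (by exact_mod_cast hm),
    padicValRat.of_nat, zpow_neg, zpow_natCast, one_div, inv_inv]

end Coefficients

section Combination

variable {p : ℕ} [Fact p.Prime] {K : Type*} [NormedField K]

def combination (d₁ d₂ : K) (n : ℕ) : K := d₁ * (bCoeff n : K) + d₂ * (cCoeff n : K)

theorem norm_combination_two_mul (hK : ∀ q : ℚ, ‖(q : K)‖ = (padicNorm p q : ℝ)) (d₁ d₂ : K)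
    (i : ℕ) : ‖combination d₁ d₂ (2 * i)‖ = ‖d₁‖ * (p : ℝ) ^ padicValNat p (2 * i)‼ := by
  rw [combination, bCoeff_two_mul, cCoeff_two_mul, Rat.cast_zero, mul_zero, add_zero, norm_mul,
    hK, padicNorm_neg_one_pow_div_natCast p i (doubleFactorial_pos _).ne']
  push_cast
  rfl

theorem norm_combination_two_mul_add_one (hK : ∀ q : ℚ, ‖(q : K)‖ = (padicNorm p q : ℝ))
    (d₁ d₂ : K) (i : ℕ) :
    ‖combination d₁ d₂ (2 * i + 1)‖ = ‖d₂‖ * (p : ℝ) ^ padicValNat p (2 * i + 1)‼ := by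
  rw [combination, bCoeff_two_mul_add_one, cCoeff_two_mul_add_one, Rat.cast_zero, mul_zero,
    zero_add, norm_mul, hK, padicNorm_neg_one_pow_div_natCast p i (doubleFactorial_pos _).ne']
  push_cast
  rfl

end Combination

section Sequences

variable {f : ℕ → ℝ} {r ρ : ℝ}

theorem tendsto_mul_pow_of_le_mul_pow {C : ℝ} {k : ℕ} (hf : 0 ≤ f)
    (hle : ∀ᶠ n in atTop, f n ≤ C * n ^ k * r ^ n) (hr : 0 < r) (hρ₀ : 0 ≤ ρ) (hρ : ρ < r⁻¹) :
    Tendsto (fun n => f n * ρ ^ n) atTop (nhds 0) := by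
  have hrρ : |r * ρ| < 1 := by
    rw [abs_of_nonneg (by positivity), ← mul_inv_cancel₀ hr.ne']
    gcongr
  have hlim := (tendsto_pow_const_mul_const_pow_of_abs_lt_one k hrρ).const_mul C
  rw [mul_zero] at hlim
  refine squeeze_zero' (.of_forall fun n => mul_nonneg (hf n) (pow_nonneg hρ₀ n)) ?_ hlim
  filter_upwards [hle] with n hn
  calc f n * ρ ^ n ≤ C * n ^ k * r ^ n * ρ ^ n := by gcongr
    _ = C * (n ^ k * (r * ρ) ^ n) := by ring

theorem not_tendsto_mul_pow_of_frequently_le {c : ℝ} (hc : 0 < c)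
    (hle : ∃ᶠ n in atTop, c * r ^ n ≤ f n) (hr : 0 < r) (hρ : r⁻¹ < ρ) :
    ¬ Tendsto (fun n => f n * ρ ^ n) atTop (nhds 0) := by
  intro hlim
  have hρ₀ : 0 < ρ := (inv_pos.2 hr).trans hρ
  have hrρ : 1 ≤ r * ρ := by
    rw [← mul_inv_cancel₀ hr.ne']
    gcongr
  obtain ⟨n, hn, hsmall⟩ := (hle.and_eventually (hlim.eventually (gt_mem_nhds hc))).exists
  have : c ≤ f n * ρ ^ n := calc
    c ≤ c * (r * ρ) ^ n := le_mul_of_one_le_right hc.le (one_le_pow₀ hrρ)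
    _ = c * r ^ n * ρ ^ n := by ring
    _ ≤ f n * ρ ^ n := by gcongr
  linarith

end Sequences

theorem inv_rpow_half_pow_two_mul_sub_one {p : ℕ} (hp1 : 1 < p) :
    (((p : ℝ) ^ (-(1 : ℝ) / (p - 1))) ^ ((1 : ℝ) / 2))⁻¹ ^ (2 * (p - 1)) = p := by
  have hp0 : (0 : ℝ) ≤ p := p.cast_nonneg
  have hsub : ((2 * (p - 1) : ℕ) : ℝ) = 2 * ((p : ℝ) - 1) := by
    rw [Nat.cast_mul, Nat.cast_sub hp1.le]; norm_num
  have hsub_pos : (0 : ℝ) < (p : ℝ) - 1 := by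
    rw [sub_pos]; exact_mod_cast hp1
  rw [← Real.rpow_mul hp0, ← Real.rpow_neg_one, ← Real.rpow_mul hp0, ← Real.rpow_natCast,
    ← Real.rpow_mul hp0, hsub]
  convert Real.rpow_one (p : ℝ) using 2
  field_simp

section Radius

variable {p : ℕ} [hp : Fact p.Prime] {K : Type*} [NormedField K] {r : ℝ}

theorem norm_combination_le (hp2 : p ≠ 2) (hK : ∀ q : ℚ, ‖(q : K)‖ = (padicNorm p q : ℝ))
    (hr : 1 < r) (hrp : r ^ (2 * (p - 1)) = p) (d₁ d₂ : K) {n : ℕ} (hn : n ≠ 0) :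
    ‖combination d₁ d₂ n‖ ≤ max ‖d₁‖ ‖d₂‖ * n ^ 2 * r ^ n := by
  rw [mul_assoc]
  obtain ⟨i, rfl | rfl⟩ := Nat.even_or_odd' n
  · rw [norm_combination_two_mul hK]
    exact mul_le_mul (le_max_left _ _) (pow_padicValNat_doubleFactorial_le hp2 hr hrp hn)
      (by positivity) (by positivity)
  · rw [norm_combination_two_mul_add_one hK]
    exact mul_le_mul (le_max_right _ _) (pow_padicValNat_doubleFactorial_le hp2 hr hrp hn)
      (by positivity) (by positivity)

theorem exists_frequently_le_norm_combination (hp2 : p ≠ 2)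
    (hK : ∀ q : ℚ, ‖(q : K)‖ = (padicNorm p q : ℝ)) (hr : 1 < r) (hrp : r ^ (2 * (p - 1)) = p)
    {d₁ d₂ : K} (hd : ¬(d₁ = 0 ∧ d₂ = 0)) :
    ∃ c > 0, ∃ᶠ n in atTop, c * r ^ n ≤ ‖combination d₁ d₂ n‖ := by
  have hr₀ : 0 < r := one_pos.trans hr
  by_cases hd₁ : d₁ = 0
  · have hd₂ : d₂ ≠ 0 := fun h => hd ⟨hd₁, h⟩
    refine ⟨‖d₂‖ / r, by positivity, frequently_atTop.2 fun N => ⟨p ^ N,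
      (N.lt_pow_self hp.out.one_lt).le, ?_⟩⟩
    obtain ⟨m, hm⟩ := (hp.out.odd_of_ne_two hp2).pow (n := N)
    have hle := pow_prime_pow_le hp2 hr hrp N
    rw [hm] at hle ⊢
    rw [norm_combination_two_mul_add_one hK, div_mul_eq_mul_div, div_le_iff₀ hr₀]
    nlinarith [norm_nonneg d₂]
  · refine ⟨‖d₁‖ / r ^ 2, by positivity, frequently_atTop.2 fun N => ⟨2 * p ^ N,
      (N.lt_pow_self hp.out.one_lt).le.trans (by omega), ?_⟩⟩
    rw [norm_combination_two_mul hK, pow_two_mul_prime_pow_eq hp2 hrp, div_mul_eq_mul_div,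
      div_le_iff₀ (by positivity)]
    linarith

end Radius

theorem radius_of_combination_general (p : ℕ) (hp : p.Prime) (hp2 : p ≠ 2)
    (K : Type*) [NormedField K]
    (hK : ∀ q : ℚ, ‖(q : K)‖ = (padicNorm p q : ℝ))
    (d₁ d₂ : K) (hd : ¬(d₁ = 0 ∧ d₂ = 0)) :
    let ω : ℝ := (p : ℝ) ^ (-(1 : ℝ) / (p - 1))
    let bcoef : ℕ → ℚ := fun n =>
      if n % 2 = 0 then (-1) ^ (n / 2) / (2 ^ (n / 2) * Nat.factorial (n / 2)) else 0
    let ccoef : ℕ → ℚ := fun n =>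
      if n % 2 = 1 then (-1) ^ (n / 2) / (∏ j ∈ Finset.range (n / 2 + 1), (2 * j + 1) : ℕ)
      else 0
    let a : ℕ → K := fun n => d₁ * (bcoef n : K) + d₂ * (ccoef n : K)
    (∀ ρ : ℝ, 0 ≤ ρ → ρ < ω ^ ((1 : ℝ) / 2) →
      Tendsto (fun n : ℕ => ‖a n‖ * ρ ^ n) atTop (nhds 0)) ∧
    (∀ ρ : ℝ, ω ^ ((1 : ℝ) / 2) < ρ →
      ¬ Tendsto (fun n : ℕ => ‖a n‖ * ρ ^ n) atTop (nhds 0)) := by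
  intro ω _ _ a
  have : Fact p.Prime := ⟨hp⟩
  obtain ⟨r, hr_def⟩ : ∃ r, r = (ω ^ ((1 : ℝ) / 2))⁻¹ := ⟨_, rfl⟩
  have hrp : r ^ (2 * (p - 1)) = p := hr_def ▸ inv_rpow_half_pow_two_mul_sub_one hp.one_lt
  have hr : 1 < r := (one_lt_pow_iff_of_nonneg (n := 2 * (p - 1)) (by rw [hr_def]; positivity)
    (by have := hp.two_le; omega)).1 (by rw [hrp]; exact_mod_cast hp.one_lt)
  rw [← inv_inv (ω ^ _), ← hr_def]
  obtain ⟨c, hc, hfreq⟩ := exists_frequently_le_norm_combination hp2 hK hr hrp hd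
  exact ⟨fun ρ hρ₀ hρ => tendsto_mul_pow_of_le_mul_pow (fun n => norm_nonneg _)
      ((eventually_ne_atTop 0).mono fun n hn => norm_combination_le hp2 hK hr hrp d₁ d₂ hn)
      (one_pos.trans hr) hρ₀ hρ,
    fun ρ hρ => not_tendsto_mul_pow_of_frequently_le hc hfreq (one_pos.trans hr) hρ⟩

/-- Let `p` be an odd prime and `K` a complete discretely valued field of
mixed characteristic `(0,p)` (its norm restricts to the `p`-adic norm on `ℚ`). Every nonzero
`K`-linear combination `h = d₁·b + d₂·c` of `b = ∑ ((-1)^i/(2^i i!)) t^(2i)` and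
`c = ∑ ((-1)^i/(2i+1)!!) t^(2i+1)` has radius of convergence exactly `ω^(1/2)`,
where `ω = p^(-1/(p-1))`. -/
theorem radius_of_combination (p : ℕ) (hp : p.Prime) (hp2 : p ≠ 2)
    (K : Type*) [NormedField K] [CompleteSpace K]
    (hK : ∀ q : ℚ, ‖(q : K)‖ = (padicNorm p q : ℝ))
    (hdisc : ∃ π : K, 0 < ‖π‖ ∧ ‖π‖ < 1 ∧ ∀ x : K, x ≠ 0 → ∃ n : ℤ, ‖x‖ = ‖π‖ ^ n)
    (d₁ d₂ : K) (hd : ¬(d₁ = 0 ∧ d₂ = 0)) :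
    let ω : ℝ := (p : ℝ) ^ (-(1 : ℝ) / (p - 1))
    let bcoef : ℕ → ℚ := fun n =>
      if n % 2 = 0 then (-1) ^ (n / 2) / (2 ^ (n / 2) * Nat.factorial (n / 2)) else 0
    let ccoef : ℕ → ℚ := fun n =>
      if n % 2 = 1 then (-1) ^ (n / 2) / (∏ j ∈ Finset.range (n / 2 + 1), (2 * j + 1) : ℕ)
      else 0
    let a : ℕ → K := fun n => d₁ * (bcoef n : K) + d₂ * (ccoef n : K)
    (∀ ρ : ℝ, 0 ≤ ρ → ρ < ω ^ ((1 : ℝ) / 2) →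
      Tendsto (fun n : ℕ => ‖a n‖ * ρ ^ n) atTop (nhds 0)) ∧
    (∀ ρ : ℝ, ω ^ ((1 : ℝ) / 2) < ρ →
      ¬ Tendsto (fun n : ℕ => ‖a n‖ * ρ ^ n) atTop (nhds 0)) :=
  radius_of_combination_general p hp hp2 K hK d₁ d₂ hd
end

section
/- Let p be odd. For every real α with ω^{1/2} < α < 1, the Laurent series a = ∑_{i≥0} (2i-1)!!·t^{-(2i+1)} has coefficients in ℤ_p satisfying |(2i-1)!!|_p·α^{-(2i+1)} → 0 as i → ∞, so a defines a bounded analytic function on the annulus α ≤ |t| < 1. -/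
/-!
Since `(2i)! = 2^i · i! · (2i-1)!!` and `i!² ∣ (2i)!`, for odd `p` the `p`-part of `i!` divides
`(2i-1)!!`. Legendre's formula `(p-1) v_p(i!) = i - s_p(i)`, with the digit sum bounded by
`s_p(i) ≤ (p-1)(log_p i + 1)`, then gives `|(2i-1)!!|_p ≤ |i!|_p ≤ p·i·ω^i`. Hence
`|(2i-1)!!|_p α^{-(2i+1)} ≤ (p/α)·i·(ω/α²)^i`, which tends to `0` because `ω < α²`.
-/

open Filter
open scoped Nat

namespace Nat

lemma prod_range_two_mul_add_one (n : ℕ) : ∏ j ∈ Finset.range n, (2 * j + 1) = (2 * n - 1)‼ := by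
  cases n with
  | zero => rfl
  | succ n =>
    simp [Finset.prod_range_succ', show 2 * (n + 1) - 1 = 2 * n + 1 by omega,
      doubleFactorial_eq_prod_odd]

lemma factorial_two_mul_eq (n : ℕ) : (2 * n)! = 2 ^ n * n ! * (2 * n - 1)‼ := by
  cases n with
  | zero => rfl
  | succ n =>
    rw [show 2 * (n + 1) = 2 * n + 1 + 1 by omega, factorial_eq_mul_doubleFactorial,
      show 2 * n + 1 + 1 = 2 * (n + 1) by omega, doubleFactorial_two_mul,
      show 2 * (n + 1) - 1 = 2 * n + 1 by omega]

lemma digits_sum_le_mul_log {b : ℕ} (hb : 1 < b) (n : ℕ) :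
    (b.digits n).sum ≤ (b - 1) * (log b n + 1) := by
  rcases eq_or_ne n 0 with rfl | hn
  · simp
  calc (b.digits n).sum ≤ (b.digits n).length • (b - 1) :=
        List.sum_le_card_nsmul _ _ fun d hd => le_sub_one_of_lt (digits_lt_base hb hd)
    _ = (b - 1) * (log b n + 1) := by rw [length_digits b n hb hn, smul_eq_mul, mul_comm]

end Nat

lemma pow_padicValNat_factorial_dvd_doubleFactorial {p : ℕ} [hp : Fact p.Prime] (hp2 : p ≠ 2)
    (n : ℕ) : p ^ padicValNat p n ! ∣ (2 * n - 1)‼ := by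
  have hdvd : n ! ∣ 2 ^ n * (2 * n - 1)‼ := by
    have h := Nat.factorial_mul_factorial_dvd_factorial_add n n
    rw [← two_mul, Nat.factorial_two_mul_eq, mul_right_comm] at h
    exact Nat.dvd_of_mul_dvd_mul_right n.factorial_pos h
  have hcop : Nat.Coprime (p ^ padicValNat p n !) (2 ^ n) :=
    ((Nat.coprime_primes hp.out Nat.prime_two).2 hp2).pow _ _
  exact hcop.dvd_of_dvd_mul_left (pow_padicValNat_dvd.trans hdvd)

lemma le_sub_one_mul_padicValNat_factorial_add_log (p : ℕ) [hp : Fact p.Prime] (n : ℕ) :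
    n ≤ (p - 1) * (padicValNat p n ! + Nat.log p n + 1) := by
  have hlegendre := sub_one_mul_padicValNat_factorial (p := p) n
  have hsum_le := Nat.digit_sum_le p n
  have hsum_le_log := Nat.digits_sum_le_mul_log hp.out.one_lt n
  rw [add_assoc, mul_add]
  omega

lemma zpow_neg_padicValNat_factorial_le (p : ℕ) [hp : Fact p.Prime] (n : ℕ) :
    (p : ℝ) ^ (-(padicValNat p n ! : ℤ)) ≤
      ((p : ℝ) ^ (-(1 : ℝ) / (p - 1))) ^ n * (p : ℝ) ^ (Nat.log p n + 1) := by
  have hp1 : (1 : ℝ) < p := mod_cast hp.out.one_lt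
  have hn : (n : ℝ) / (p - 1) ≤ padicValNat p n ! + Nat.log p n + 1 := by
    rw [div_le_iff₀ (by linarith), mul_comm]
    have := (Nat.cast_le (α := ℝ)).2 (le_sub_one_mul_padicValNat_factorial_add_log p n)
    push_cast [Nat.cast_sub hp.out.one_le] at this
    exact this
  rw [← Real.rpow_intCast, ← Real.rpow_natCast _ n, ← Real.rpow_mul (by positivity),
    ← Real.rpow_natCast _ (_ + 1), ← Real.rpow_add (by positivity)]
  apply Real.rpow_le_rpow_of_exponent_le hp1.le
  rw [div_mul_eq_mul_div, neg_one_mul, neg_div, Int.cast_neg, Int.cast_natCast]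
  push_cast
  linarith

lemma padicNorm_doubleFactorial_le (p : ℕ) [hp : Fact p.Prime] (hp2 : p ≠ 2) {n : ℕ}
    (hn : n ≠ 0) :
    (padicNorm p ((2 * n - 1)‼ : ℤ) : ℝ) ≤ ((p : ℝ) ^ (-(1 : ℝ) / (p - 1))) ^ n * (p * n) := by
  have hdvd : ((p ^ padicValNat p n ! : ℕ) : ℤ) ∣ ((2 * n - 1)‼ : ℤ) :=
    Int.natCast_dvd_natCast.2 (pow_padicValNat_factorial_dvd_doubleFactorial hp2 n)
  have hpow : (p : ℝ) ^ (Nat.log p n + 1) ≤ p * n := by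
    rw [pow_succ, mul_comm]
    gcongr
    exact_mod_cast Nat.pow_log_le_self p hn
  calc (padicNorm p ((2 * n - 1)‼ : ℤ) : ℝ) ≤ (p : ℝ) ^ (-(padicValNat p n ! : ℤ)) := by
        simpa using (Rat.cast_le (K := ℝ)).2 (padicNorm.dvd_iff_norm_le.1 hdvd)
    _ ≤ _ := zpow_neg_padicValNat_factorial_le p n
    _ ≤ _ := by gcongr

lemma tendsto_mul_inv_pow_two_mul_add_one {c : ℕ → ℝ} {ω α C : ℝ} (hω : 0 ≤ ω) (hα : 0 < α)
    (hωα : ω < α ^ 2) (hc_nonneg : ∀ i, 0 ≤ c i) (hc : ∀ᶠ i in atTop, c i ≤ ω ^ i * (C * i)) :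
    Tendsto (fun i => c i * (α ^ (2 * i + 1))⁻¹) atTop (nhds 0) := by
  have hratio : ω / α ^ 2 < 1 := (div_lt_one (by positivity)).2 hωα
  refine squeeze_zero' (g := fun i : ℕ => C / α * (i * (ω / α ^ 2) ^ i)) ?_ ?_ ?_
  · exact Eventually.of_forall fun i => mul_nonneg (hc_nonneg i) (by positivity)
  · filter_upwards [hc] with i hci
    calc c i * (α ^ (2 * i + 1))⁻¹ ≤ ω ^ i * (C * i) * (α ^ (2 * i + 1))⁻¹ := by gcongr
      _ = C / α * (i * (ω / α ^ 2) ^ i) := by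
          rw [div_pow, pow_succ, pow_mul]
          field_simp
  · simpa using (tendsto_self_mul_const_pow_of_lt_one (by positivity) hratio).const_mul (C / α)

theorem a_series_overconvergent_general (p : ℕ) (hp : p.Prime) (hp2 : p ≠ 2) (α : ℝ)
    (hα₁ : ((p : ℝ) ^ (-(1 : ℝ) / (p - 1))) ^ ((1 : ℝ) / 2) < α) :
    let dfac : ℕ → ℤ := fun i =>
      if i = 0 then -1 else (∏ j ∈ Finset.range i, (2 * j + 1) : ℕ)
    (∀ i : ℕ, (padicNorm p (dfac i) : ℝ) ≤ 1) ∧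
    Tendsto (fun i : ℕ => (padicNorm p (dfac i) : ℝ) * (α ^ (2 * i + 1))⁻¹)
      atTop (nhds 0) := by
  intro dfac
  have : Fact p.Prime := ⟨hp⟩
  set ω : ℝ := (p : ℝ) ^ (-(1 : ℝ) / (p - 1))
  have hω : 0 < ω := Real.rpow_pos_of_pos (mod_cast hp.pos) _
  have hα : 0 < α := (Real.rpow_pos_of_pos hω _).trans hα₁
  have hωα : ω < α ^ 2 := by
    rw [← Real.sqrt_lt' hα, Real.sqrt_eq_rpow]
    exact hα₁
  refine ⟨fun i => mod_cast padicNorm.of_int (dfac i),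
    tendsto_mul_inv_pow_two_mul_add_one (C := p) hω.le hα hωα
      (fun i => mod_cast padicNorm.nonneg _) ?_⟩
  filter_upwards [eventually_ne_atTop 0] with i hi
  have hdfac : dfac i = ((2 * i - 1)‼ : ℤ) := by
    simp [dfac, hi, Nat.prod_range_two_mul_add_one]
  rw [hdfac]
  exact padicNorm_doubleFactorial_le p hp2 hi

/-- Let `p` be an odd prime, `ω = p^(-1/(p-1))`, and
`(2i-1)!! = ∏_{j=0}^{i-1}(2j+1)` with the convention `(-1)!! = -1`. For every real `α` with
`ω^(1/2) < α < 1`, the coefficients of `a = ∑ (2i-1)!!·t^(-(2i+1))` are `p`-adic integers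
(`|(2i-1)!!|_p ≤ 1`) and `|(2i-1)!!|_p · α^(-(2i+1)) → 0` as `i → ∞`, so `a` is a bounded
analytic function on the annulus `α ≤ |t| < 1`. -/
theorem a_series_overconvergent (p : ℕ) (hp : p.Prime) (hp2 : p ≠ 2) (α : ℝ)
    (hα₁ : ((p : ℝ) ^ (-(1 : ℝ) / (p - 1))) ^ ((1 : ℝ) / 2) < α) (hα₂ : α < 1) :
    let dfac : ℕ → ℤ := fun i =>
      if i = 0 then -1 else (∏ j ∈ Finset.range i, (2 * j + 1) : ℕ)
    (∀ i : ℕ, (padicNorm p (dfac i) : ℝ) ≤ 1) ∧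
    Tendsto (fun i : ℕ => (padicNorm p (dfac i) : ℝ) * (α ^ (2 * i + 1))⁻¹)
      atTop (nhds 0) :=
  a_series_overconvergent_general p hp hp2 α hα₁
end

section
/- Let K be a complete non-archimedean valued field. A formal power series f = ∑_{i≥0} a_i t^i with a_i ∈ K satisfies |f|_ρ = O((-log(1/ρ))^δ) as ρ ↑ 1 (where |f|_ρ = sup_i |a_i|ρ^i) if and only if sup_{i≥0} |a_i|/(i+1)^δ < ∞. -/
/-!
Write `ρ = e^{-L}`, so that `L = log (1/ρ)`. If `|a_i| ≤ M (i+1)^δ`, then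
`|a_i| ρ^i ≤ M ρ⁻¹ (i+1)^δ e^{-(i+1)L}`, and the maximum `(δ/e)^δ` of `t^δ e^{-t}` on `t ≥ 0`
bounds this by `M ρ⁻¹ (δ/e)^δ L^{-δ}`. Conversely, the Gauss norm at `ρ = e^{-1/(i+1)}`, where
`L⁻¹ = i+1` and `ρ^i ≥ e^{-1}`, bounds `|a_i|` by `e C (i+1)^δ`; as `ρ → 1` when `i → ∞`, this
holds for all large `i`.
-/

open Filter Set Real

lemma rpow_mul_exp_neg_le {δ t : ℝ} (hδ : 0 ≤ δ) (ht : 0 ≤ t) :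
    t ^ δ * exp (-t) ≤ δ ^ δ * exp (-δ) := by
  rcases hδ.eq_or_lt with rfl | hδ
  · simpa using exp_le_one_iff.mpr (neg_nonpos.mpr ht)
  have hquot : (t / δ) ^ δ ≤ exp (t - δ) := by
    calc (t / δ) ^ δ ≤ exp (t / δ - 1) ^ δ := by
          gcongr
          linarith [add_one_le_exp (t / δ - 1)]
      _ = exp (t - δ) := by rw [← exp_mul]; field_simp
  calc t ^ δ * exp (-t) = δ ^ δ * (t / δ) ^ δ * exp (-t) := by
        rw [← mul_rpow hδ.le (by positivity), mul_div_cancel₀ t hδ.ne']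
    _ ≤ δ ^ δ * exp (t - δ) * exp (-t) := by gcongr
    _ = δ ^ δ * exp (-δ) := by rw [mul_assoc, ← exp_add]; ring_nf

lemma rpow_mul_exp_neg_mul_le {δ x L : ℝ} (hδ : 0 ≤ δ) (hx : 0 ≤ x) (hL : 0 < L) :
    x ^ δ * exp (-(x * L)) ≤ δ ^ δ * exp (-δ) * L⁻¹ ^ δ := by
  have hsplit : x ^ δ = (x * L) ^ δ * L⁻¹ ^ δ := by
    rw [← mul_rpow (by positivity) (by positivity), mul_inv_cancel_right₀ hL.ne']
  calc x ^ δ * exp (-(x * L)) = (x * L) ^ δ * exp (-(x * L)) * L⁻¹ ^ δ := by rw [hsplit]; ring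
    _ ≤ δ ^ δ * exp (-δ) * L⁻¹ ^ δ :=
        mul_le_mul_of_nonneg_right (rpow_mul_exp_neg_le hδ (by positivity)) (by positivity)

lemma iSup_mul_pow_le_of_le_mul_rpow {c : ℕ → ℝ} {δ M ρ : ℝ} (hδ : 0 ≤ δ) (hM : 0 ≤ M)
    (hc : ∀ i, c i ≤ M * ((i : ℝ) + 1) ^ δ) (hρ₀ : 0 < ρ) (hρ₁ : ρ < 1) :
    ⨆ i, c i * ρ ^ i ≤ M * δ ^ δ * exp (-δ) * ρ⁻¹ * (log (1 / ρ))⁻¹ ^ δ := by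
  set L := log (1 / ρ)
  have hL : 0 < L := log_pos (one_lt_one_div hρ₀ hρ₁)
  have hρ : ρ = exp (-L) := by simp only [L, one_div, log_inv, neg_neg, exp_log hρ₀]
  refine ciSup_le fun i => ?_
  have hpow : ρ ^ i = ρ⁻¹ * exp (-(((i : ℝ) + 1) * L)) := by
    rw [eq_inv_mul_iff_mul_eq₀ hρ₀.ne', ← pow_succ', hρ, ← exp_nat_mul]
    push_cast
    ring_nf
  calc c i * ρ ^ i ≤ M * ((i : ℝ) + 1) ^ δ * ρ ^ i := by gcongr; exact hc i
    _ = M * ρ⁻¹ * (((i : ℝ) + 1) ^ δ * exp (-(((i : ℝ) + 1) * L))) := by rw [hpow]; ring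
    _ ≤ M * ρ⁻¹ * (δ ^ δ * exp (-δ) * L⁻¹ ^ δ) :=
        mul_le_mul_of_nonneg_left (rpow_mul_exp_neg_mul_le hδ (by positivity) hL) (by positivity)
    _ = M * δ ^ δ * exp (-δ) * ρ⁻¹ * L⁻¹ ^ δ := by ring

lemma exp_neg_one_le_exp_neg_inv_pow (n : ℕ) : exp (-1) ≤ exp (-(1 / ((n : ℝ) + 1))) ^ n := by
  rw [← exp_nat_mul, exp_le_exp, mul_neg, neg_le_neg_iff, mul_one_div,
    div_le_one (by positivity)]
  linarith

lemma le_exp_one_mul_rpow_of_iSup_mul_pow_le {c : ℕ → ℝ} {C δ : ℝ} {n : ℕ} (hcn : 0 ≤ c n)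
    (hbdd : BddAbove (range fun i => c i * exp (-(1 / ((n : ℝ) + 1))) ^ i))
    (hC : ⨆ i, c i * exp (-(1 / ((n : ℝ) + 1))) ^ i ≤
      C * (log (1 / exp (-(1 / ((n : ℝ) + 1)))))⁻¹ ^ δ) :
    c n ≤ exp 1 * C * ((n : ℝ) + 1) ^ δ := by
  have hlog : (log (1 / exp (-(1 / ((n : ℝ) + 1)))))⁻¹ = (n : ℝ) + 1 := by
    rw [one_div (exp _), log_inv, log_exp, neg_neg, one_div, inv_inv]
  rw [hlog] at hC
  have h : c n * (exp 1)⁻¹ ≤ C * ((n : ℝ) + 1) ^ δ :=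
    calc c n * (exp 1)⁻¹ = c n * exp (-1) := by rw [exp_neg]
      _ ≤ c n * exp (-(1 / ((n : ℝ) + 1))) ^ n := by
          gcongr; exact exp_neg_one_le_exp_neg_inv_pow n
      _ ≤ ⨆ i, c i * exp (-(1 / ((n : ℝ) + 1))) ^ i := le_ciSup hbdd n
      _ ≤ C * ((n : ℝ) + 1) ^ δ := hC
  rw [mul_inv_le_iff₀ (exp_pos 1)] at h
  linarith

lemma bddAbove_div_rpow_of_iSup_mul_pow_le {c : ℕ → ℝ} {C δ ρ₀ : ℝ} (hc : ∀ i, 0 ≤ c i)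
    (hbdd : ∀ ρ, 0 ≤ ρ → ρ < 1 → BddAbove (range fun i => c i * ρ ^ i)) (hρ₀ : ρ₀ < 1)
    (hC : ∀ ρ, ρ₀ ≤ ρ → ρ < 1 → ⨆ i, c i * ρ ^ i ≤ C * (log (1 / ρ))⁻¹ ^ δ) :
    BddAbove (range fun i => c i / ((i : ℝ) + 1) ^ δ) := by
  refine IsBoundedUnder.bddAbove_range ⟨exp 1 * C, eventually_map.mpr ?_⟩
  have hlim : Tendsto (fun n : ℕ => exp (-(1 / ((n : ℝ) + 1)))) atTop (nhds 1) := by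
    have := (continuous_exp.tendsto _).comp (tendsto_one_div_add_atTop_nhds_zero_nat (𝕜 := ℝ)).neg
    rwa [neg_zero, exp_zero] at this
  filter_upwards [hlim.eventually_const_le hρ₀] with n hn
  have hρ₁ : exp (-(1 / ((n : ℝ) + 1))) < 1 := exp_lt_one_iff.mpr (neg_lt_zero.mpr (by positivity))
  rw [div_le_iff₀ (by positivity)]
  exact le_exp_one_mul_rpow_of_iSup_mul_pow_le (hc n) (hbdd _ (exp_pos _).le hρ₁) (hC _ hn hρ₁)

theorem log_growth_characterization_general (K : Type*) [NormedField K]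
    (δ : ℝ) (hδ : 0 ≤ δ)
    (a : ℕ → K)
    (hconv : ∀ η : ℝ, 0 ≤ η → η < 1 →
      Tendsto (fun i : ℕ => ‖a i‖ * η ^ i) atTop (nhds 0)) :
    (∃ C : ℝ, ∃ ρ₀ : ℝ, 0 < ρ₀ ∧ ρ₀ < 1 ∧ ∀ ρ : ℝ, ρ₀ ≤ ρ → ρ < 1 →
      (⨆ i : ℕ, ‖a i‖ * ρ ^ i) ≤ C * ((Real.log (1 / ρ))⁻¹) ^ δ) ↔
    BddAbove (Set.range fun i : ℕ => ‖a i‖ / ((i : ℝ) + 1) ^ δ) := by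
  constructor
  · rintro ⟨C, ρ₀, -, hρ₀, hC⟩
    exact bddAbove_div_rpow_of_iSup_mul_pow_le (fun i => norm_nonneg _)
      (fun ρ h₀ h₁ => (hconv ρ h₀ h₁).bddAbove_range) hρ₀ hC
  · rintro ⟨M, hM⟩
    have hc : ∀ i, ‖a i‖ ≤ M * ((i : ℝ) + 1) ^ δ := fun i =>
      (div_le_iff₀ (by positivity)).mp (hM ⟨i, rfl⟩)
    have hM₀ : 0 ≤ M := (norm_nonneg _).trans (by simpa using hc 0)
    refine ⟨M * δ ^ δ * exp (-δ) * 2, 1 / 2, by norm_num, by norm_num, fun ρ hρ₀ hρ₁ => ?_⟩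
    have hρ : 0 < ρ := by linarith
    calc ⨆ i, ‖a i‖ * ρ ^ i ≤ M * δ ^ δ * exp (-δ) * ρ⁻¹ * (log (1 / ρ))⁻¹ ^ δ :=
          iSup_mul_pow_le_of_le_mul_rpow hδ hM₀ hc hρ hρ₁
      _ ≤ M * δ ^ δ * exp (-δ) * 2 * (log (1 / ρ))⁻¹ ^ δ := by
          have hL : 0 < log (1 / ρ) := log_pos (one_lt_one_div hρ hρ₁)
          gcongr
          rw [inv_le_comm₀ hρ two_pos]
          linarith

/-- Let `K` be a complete non-archimedean valued field, `δ ≥ 0`, and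
`f = ∑ a_i t^i` a power series converging on the open unit disc. Then the Gauss norms
satisfy `|f|_ρ = O((log(1/ρ))^(-δ))` as `ρ ↑ 1` if and only if
`sup_i |a_i|/(i+1)^δ < ∞`; both conditions say `f` has order of log-growth at most `δ`. -/
theorem log_growth_characterization (K : Type*) [NormedField K] [CompleteSpace K]
    (hna : IsNonarchimedean (norm : K → ℝ)) (δ : ℝ) (hδ : 0 ≤ δ)
    (a : ℕ → K)
    (hconv : ∀ η : ℝ, 0 ≤ η → η < 1 →
      Tendsto (fun i : ℕ => ‖a i‖ * η ^ i) atTop (nhds 0)) :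
    (∃ C : ℝ, ∃ ρ₀ : ℝ, 0 < ρ₀ ∧ ρ₀ < 1 ∧ ∀ ρ : ℝ, ρ₀ ≤ ρ → ρ < 1 →
      (⨆ i : ℕ, ‖a i‖ * ρ ^ i) ≤ C * ((Real.log (1 / ρ))⁻¹) ^ δ) ↔
    BddAbove (Set.range fun i : ℕ => ‖a i‖ / ((i : ℝ) + 1) ^ δ) :=
  log_growth_characterization_general K δ hδ a hconv
end

section
/- Let p ≠ 2 and K a complete discretely valued field of mixed characteristic (0,p). Let M be the rank-two differential module over K[[t]]₀ with basis e₁,e₂ and D(e₁) = e₂, D(e₂) = -e₁ - t·e₂. Then M is indecomposable: M is not isomorphic to a direct sum of two rank-one differential submodules. -/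
/-!
The vector `e = (t, 1)` is horizontal, `D e = 0`. Suppose `M` has a basis `v₁, v₂` with
`D vᵢ = λᵢ vᵢ` and write `e = c₁ v₁ + c₂ v₂`. Then each `cᵢ vᵢ` is horizontal, and the Wronskian
`N = W(c₁ v₁, c₂ v₂) = c₁ c₂ W(v₁, v₂)` of two horizontal vectors satisfies `N' = t N`.

A bounded solution of `f' = a + ε t f` with `|ε| = 1` vanishes: its coefficients satisfy
`(2k + r)‼ f_{2k+r} = εᵏ r‼ f_r`, and for odd `p` the double factorials `(2k + r)‼` become
`p`-adically small along every residue class `r`. Hence `N = 0`, and since `W(v₁, v₂)` is a unit,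
say `c₁ = 0`. Then `e = c₂ v₂`, so `s = W(v₁, e)` is a unit of `K[[t]]₀`, and writing
`v₁ = (g, h)` the bounded series `q = h / s` satisfies `q' = -1 - t q`, which is impossible
for the same reason.
-/

open PowerSeries Filter Topology

section Recurrence

variable {R : Type*} [CommRing R] {f : R⟦X⟧} {a ε : R}

theorem natCast_mul_coeff_add_two_of_derivative_eq (h : d⁄dX R f = C a + ε • (X * f)) (n : ℕ) :
    ((n + 2 : ℕ) : R) * coeff (n + 2) f = ε * coeff n f := by
  have := congrArg (coeff (n + 1)) h
  rw [coeff_derivative, map_add, coeff_C, map_smul, coeff_succ_X_mul] at this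
  simp only [Nat.add_one_ne_zero, if_false, zero_add, smul_eq_mul] at this
  push_cast at this ⊢
  linear_combination this

open Nat in
theorem doubleFactorial_mul_coeff_of_derivative_eq (h : d⁄dX R f = C a + ε • (X * f))
    (k r : ℕ) : ((2 * k + r)‼ : R) * coeff (2 * k + r) f = ε ^ k * (r‼ * coeff r f) := by
  induction k with
  | zero => simp
  | succ k ih =>
    rw [show 2 * (k + 1) + r = 2 * k + r + 2 by ring, doubleFactorial_add_two, Nat.cast_mul]
    linear_combination
      ((2 * k + r)‼ : R) * natCast_mul_coeff_add_two_of_derivative_eq h (2 * k + r) + ε * ih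

end Recurrence

open Nat in
theorem Nat.self_dvd_doubleFactorial : ∀ {n : ℕ}, n ≠ 0 → n ∣ n‼
  | n + 1, _ => doubleFactorial_add_one n ▸ dvd_mul_right _ _

open Nat in
theorem Nat.exists_pow_dvd_doubleFactorial {p : ℕ} (hp : Odd p) (m r : ℕ) :
    ∃ k, p ^ m ∣ (2 * k + r)‼ := by
  obtain ⟨s, hs⟩ := hp.pow (n := m)
  refine ⟨(r + 2) * s + 1, ?_⟩
  have hn : 2 * ((r + 2) * s + 1) + r = (r + 2) * p ^ m := by rw [hs]; ring
  rw [hn]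
  exact (dvd_mul_left _ _).trans (self_dvd_doubleFactorial (by rw [← hn]; omega))

section PadicNorm

variable {p : ℕ} [Fact p.Prime] {K : Type*} [NormedField K]

theorem isUltrametricDist_of_norm_natCast_eq_padicNorm
    (hK : ∀ n : ℕ, ‖(n : K)‖ = padicNorm p n) : IsUltrametricDist K :=
  IsUltrametricDist.isUltrametricDist_of_forall_norm_natCast_le_one fun n => by
    rw [hK]; exact_mod_cast padicNorm.of_nat n

theorem charZero_of_norm_natCast_eq_padicNorm
    (hK : ∀ n : ℕ, ‖(n : K)‖ = padicNorm p n) : CharZero K :=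
  charZero_of_inj_zero fun n hn => by
    have h := hK n
    rw [hn, norm_zero] at h
    exact_mod_cast padicNorm.zero_of_padicNorm_eq_zero (p := p) (mod_cast h.symm)

theorem norm_natCast_le_of_pow_dvd (hK : ∀ n : ℕ, ‖(n : K)‖ = padicNorm p n) {m n : ℕ}
    (h : p ^ m ∣ n) : ‖(n : K)‖ ≤ (p : ℝ)⁻¹ ^ m := by
  have h' : padicNorm p n ≤ (p : ℚ) ^ (-(m : ℤ)) :=
    mod_cast padicNorm.dvd_iff_norm_le.mp (Int.natCast_dvd_natCast.mpr h)
  have := (Rat.cast_le (K := ℝ)).mpr h'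
  rwa [Rat.cast_zpow, Rat.cast_natCast, zpow_neg, zpow_natCast, ← inv_pow, ← hK] at this

theorem eq_zero_of_norm_le_natCast_mul (hK : ∀ n : ℕ, ‖(n : K)‖ = padicNorm p n) {x : K}
    {B : ℝ} (hB : 0 ≤ B) (h : ∀ m, ∃ n : ℕ, p ^ m ∣ n ∧ ‖x‖ ≤ ‖(n : K)‖ * B) : x = 0 := by
  have hp : (1 : ℝ) < p := mod_cast (Fact.out : p.Prime).one_lt
  have hlim : Tendsto (fun m : ℕ => (p : ℝ)⁻¹ ^ m * B) atTop (𝓝 (0 * B)) :=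
    (tendsto_pow_atTop_nhds_zero_of_lt_one (by positivity) (inv_lt_one_of_one_lt₀ hp)).mul_const B
  refine norm_le_zero_iff.mp (ge_of_tendsto' (zero_mul B ▸ hlim) fun m => ?_)
  obtain ⟨n, hdvd, hx⟩ := h m
  exact hx.trans (mul_le_mul_of_nonneg_right (norm_natCast_le_of_pow_dvd hK hdvd) hB)

open Nat in
theorem eq_zero_of_derivative_eq_C_add_smul_X_mul (hp2 : p ≠ 2)
    (hK : ∀ n : ℕ, ‖(n : K)‖ = padicNorm p n)
    {f : K⟦X⟧} (hf : BddAbove (Set.range fun i => ‖coeff i f‖)) {a ε : K} (hε : ‖ε‖ = 1)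
    (h : d⁄dX K f = C a + ε • (X * f)) : f = 0 := by
  have := charZero_of_norm_natCast_eq_padicNorm hK
  obtain ⟨B, hB⟩ := hf
  have hB0 : 0 ≤ B := (norm_nonneg _).trans (hB ⟨0, rfl⟩)
  ext r
  have hr : (r‼ : K) * coeff r f = 0 := by
    refine eq_zero_of_norm_le_natCast_mul hK hB0 fun m => ?_
    obtain ⟨k, hk⟩ := exists_pow_dvd_doubleFactorial ((Fact.out : p.Prime).odd_of_ne_two hp2) m r
    refine ⟨_, hk, ?_⟩
    calc ‖(r‼ : K) * coeff r f‖ = ‖((2 * k + r)‼ : K) * coeff (2 * k + r) f‖ := by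
          rw [doubleFactorial_mul_coeff_of_derivative_eq h k r, norm_mul _ (_ * _), norm_pow, hε,
            one_pow, one_mul]
      _ ≤ ‖((2 * k + r)‼ : K)‖ * B := by
          rw [norm_mul]; exact mul_le_mul_of_nonneg_left (hB ⟨_, rfl⟩) (norm_nonneg _)
  simpa [(doubleFactorial_pos r).ne'] using hr

theorem eq_zero_of_derivative_eq_X_mul (hp2 : p ≠ 2) (hK : ∀ n : ℕ, ‖(n : K)‖ = padicNorm p n)
    {f : K⟦X⟧} (hf : BddAbove (Set.range fun i => ‖coeff i f‖)) (h : d⁄dX K f = X * f) :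
    f = 0 :=
  eq_zero_of_derivative_eq_C_add_smul_X_mul hp2 hK hf (a := 0) norm_one
    (by rw [h, map_zero, zero_add, one_smul])

theorem derivative_ne_neg_one_sub_X_mul (hp2 : p ≠ 2)
    (hK : ∀ n : ℕ, ‖(n : K)‖ = padicNorm p n) {f : K⟦X⟧}
    (hf : BddAbove (Set.range fun i => ‖coeff i f‖)) : d⁄dX K f ≠ -1 - X * f := by
  intro h
  have hf0 := eq_zero_of_derivative_eq_C_add_smul_X_mul hp2 hK hf (a := -1) (ε := -1)
    (by rw [norm_neg, norm_one])
    (by rw [h, map_neg, map_one, neg_smul, one_smul]; ring)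
  rw [hf0, map_zero, mul_zero, sub_zero] at h
  exact one_ne_zero (neg_eq_zero.mp h.symm)

end PadicNorm

section Bounded

variable (K : Type*) [NormedField K] [IsUltrametricDist K]

def boundedPowerSeries : Subring K⟦X⟧ where
  carrier := {f | BddAbove (Set.range fun i => ‖coeff i f‖)}
  mul_mem' := by
    rintro f g ⟨A, hA⟩ ⟨B, hB⟩
    have hA0 : 0 ≤ A := (norm_nonneg _).trans (hA ⟨0, rfl⟩)
    refine ⟨A * B, Set.forall_mem_range.2 fun n => ?_⟩
    rw [coeff_mul]
    refine IsUltrametricDist.norm_sum_le_of_forall_le_of_nonneg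
      (mul_nonneg hA0 ((norm_nonneg _).trans (hB ⟨0, rfl⟩))) fun ij _ => ?_
    rw [norm_mul]
    exact mul_le_mul (hA ⟨_, rfl⟩) (hB ⟨_, rfl⟩) (norm_nonneg _) hA0
  one_mem' := ⟨1, Set.forall_mem_range.2 fun n => by rw [coeff_one]; split_ifs <;> simp⟩
  add_mem' := by
    rintro f g ⟨A, hA⟩ ⟨B, hB⟩
    refine ⟨max A B, Set.forall_mem_range.2 fun n => ?_⟩
    rw [map_add]
    exact (IsUltrametricDist.norm_add_le_max _ _).trans (max_le_max (hA ⟨n, rfl⟩) (hB ⟨n, rfl⟩))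
  zero_mem' := ⟨0, Set.forall_mem_range.2 fun n => by simp⟩
  neg_mem' := by
    rintro f ⟨A, hA⟩
    exact ⟨A, Set.forall_mem_range.2 fun n => by simpa using hA ⟨n, rfl⟩⟩

theorem X_mem_boundedPowerSeries : (X : K⟦X⟧) ∈ boundedPowerSeries K :=
  ⟨1, Set.forall_mem_range.2 fun n => by rw [coeff_X]; split_ifs <;> simp⟩

end Bounded

namespace DiffModuleM

variable {R : Type*} [CommRing R]

noncomputable def D (v : R⟦X⟧ × R⟦X⟧) : R⟦X⟧ × R⟦X⟧ :=
  (d⁄dX R v.1 - v.2, v.1 + d⁄dX R v.2 - X * v.2)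

noncomputable def wronskian (v w : R⟦X⟧ × R⟦X⟧) : R⟦X⟧ := v.1 * w.2 - v.2 * w.1

theorem D_add (v w : R⟦X⟧ × R⟦X⟧) : D (v + w) = D v + D w := by
  ext : 1 <;> simp only [D, Prod.fst_add, Prod.snd_add, map_add] <;> ring

theorem D_smul (c : R⟦X⟧) (v : R⟦X⟧ × R⟦X⟧) : D (c • v) = d⁄dX R c • v + c • D v := by
  ext : 1 <;> simp only [D, Prod.smul_fst, Prod.smul_snd, Prod.fst_add, Prod.snd_add, smul_eq_mul,
    Derivation.leibniz] <;> ring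

theorem D_X_one : D ((X, 1) : R⟦X⟧ × R⟦X⟧) = 0 := by
  ext : 1 <;> simp [D]

theorem wronskian_smul_left (c : R⟦X⟧) (v w : R⟦X⟧ × R⟦X⟧) :
    wronskian (c • v) w = c * wronskian v w := by
  simp only [wronskian, Prod.smul_fst, Prod.smul_snd, smul_eq_mul]; ring

theorem wronskian_smul_right (c : R⟦X⟧) (v w : R⟦X⟧ × R⟦X⟧) :
    wronskian v (c • w) = c * wronskian v w := by
  simp only [wronskian, Prod.smul_fst, Prod.smul_snd, smul_eq_mul]; ring

theorem wronskian_swap (v w : R⟦X⟧ × R⟦X⟧) : wronskian w v = -wronskian v w := by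
  simp only [wronskian]; ring

theorem wronskian_smul_add_smul (a b c d : R⟦X⟧) (v w : R⟦X⟧ × R⟦X⟧) :
    wronskian (a • v + b • w) (c • v + d • w) = (a * d - b * c) * wronskian v w := by
  simp only [wronskian, Prod.fst_add, Prod.snd_add, Prod.smul_fst, Prod.smul_snd, smul_eq_mul]
  ring

theorem wronskian_mem {S : Subring R⟦X⟧} {v w : R⟦X⟧ × R⟦X⟧} (hv₁ : v.1 ∈ S) (hv₂ : v.2 ∈ S)
    (hw₁ : w.1 ∈ S) (hw₂ : w.2 ∈ S) : wronskian v w ∈ S :=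
  sub_mem (mul_mem hv₁ hw₂) (mul_mem hv₂ hw₁)

theorem derivative_wronskian (v w : R⟦X⟧ × R⟦X⟧) :
    d⁄dX R (wronskian v w) = wronskian (D v) w + wronskian v (D w) + X * wronskian v w := by
  simp only [wronskian, D, map_sub, Derivation.leibniz, smul_eq_mul]; ring

theorem derivative_wronskian_of_D_eq_smul {v w : R⟦X⟧ × R⟦X⟧} {l m : R⟦X⟧} (hv : D v = l • v)
    (hw : D w = m • w) : d⁄dX R (wronskian v w) = (l + m + X) * wronskian v w := by
  rw [derivative_wronskian, hv, hw, wronskian_smul_left, wronskian_smul_right]; ring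

theorem derivative_wronskian_of_D_eq_zero {v w : R⟦X⟧ × R⟦X⟧} (hv : D v = 0) (hw : D w = 0) :
    d⁄dX R (wronskian v w) = X * wronskian v w := by
  rw [derivative_wronskian, hv, hw]
  simp [wronskian]

theorem D_smul_eq_zero_of_D_add_eq_zero {v₁ v₂ : R⟦X⟧ × R⟦X⟧} {l₁ l₂ c₁ c₂ : R⟦X⟧}
    (hv₁ : D v₁ = l₁ • v₁) (hv₂ : D v₂ = l₂ • v₂)
    (hindep : ∀ a₁ a₂ : R⟦X⟧, a₁ • v₁ + a₂ • v₂ = 0 → a₁ = 0 ∧ a₂ = 0)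
    (h : D (c₁ • v₁ + c₂ • v₂) = 0) : D (c₁ • v₁) = 0 ∧ D (c₂ • v₂) = 0 := by
  have hD : ∀ (c l : R⟦X⟧) (v : R⟦X⟧ × R⟦X⟧), D v = l • v → D (c • v) = (d⁄dX R c + c * l) • v :=
    fun c l v hv => by rw [D_smul, hv, smul_smul, add_smul]
  rw [D_add, hD c₁ l₁ v₁ hv₁, hD c₂ l₂ v₂ hv₂] at h
  obtain ⟨h₁, h₂⟩ := hindep _ _ h
  rw [hD c₁ l₁ v₁ hv₁, hD c₂ l₂ v₂ hv₂, h₁, h₂, zero_smul, zero_smul]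
  exact ⟨rfl, rfl⟩

theorem exists_mul_wronskian_eq_one {S : Subring R⟦X⟧} {v₁ v₂ : R⟦X⟧ × R⟦X⟧}
    (hspan : ∀ w : R⟦X⟧ × R⟦X⟧, w.1 ∈ S → w.2 ∈ S →
      ∃ c₁ c₂ : R⟦X⟧, c₁ ∈ S ∧ c₂ ∈ S ∧ w = c₁ • v₁ + c₂ • v₂) :
    ∃ u ∈ S, wronskian v₁ v₂ * u = 1 := by
  obtain ⟨a, b, ha, hb, h₁⟩ := hspan (1, 0) (one_mem S) (zero_mem S)
  obtain ⟨c, d, hc, hd, h₂⟩ := hspan (0, 1) (zero_mem S) (one_mem S)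
  refine ⟨a * d - b * c, sub_mem (mul_mem ha hd) (mul_mem hb hc), ?_⟩
  rw [mul_comm, ← wronskian_smul_add_smul, ← h₁, ← h₂]
  simp [wronskian]

variable {p : ℕ} [Fact p.Prime] {K : Type*} [NormedField K] [IsUltrametricDist K]

theorem false_of_D_eq_smul_of_wronskian_X_one_mul_eq_one (hp2 : p ≠ 2)
    (hK : ∀ n : ℕ, ‖(n : K)‖ = padicNorm p n) {v : K⟦X⟧ × K⟦X⟧} {l u : K⟦X⟧}
    (hv : D v = l • v) (hh : v.2 ∈ boundedPowerSeries K) (hu : u ∈ boundedPowerSeries K)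
    (hs : wronskian v (X, 1) * u = 1) : False := by
  have hs' : d⁄dX K (wronskian v (X, 1)) = (l + X) * wronskian v (X, 1) := by
    simpa using derivative_wronskian_of_D_eq_smul hv (D_X_one.trans (zero_smul _ _).symm)
  have hu' : d⁄dX K u = -(l + X) * u := by
    have := congrArg (d⁄dX K) hs
    rw [Derivation.leibniz, hs', Derivation.map_one_eq_zero, smul_eq_mul, smul_eq_mul] at this
    linear_combination u * this - (d⁄dX K u + (l + X) * u) * hs
  have hv₂ : d⁄dX K v.2 = l * v.2 - v.1 + X * v.2 := by
    have := congrArg Prod.snd hv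
    simp only [D, Prod.smul_snd, smul_eq_mul] at this
    linear_combination this
  refine derivative_ne_neg_one_sub_X_mul hp2 hK (mul_mem hh hu) ?_
  rw [Derivation.leibniz, smul_eq_mul, smul_eq_mul, hu', hv₂]
  simp only [wronskian] at hs
  linear_combination -hs

theorem false_of_X_one_eq_smul (hp2 : p ≠ 2)
    (hK : ∀ n : ℕ, ‖(n : K)‖ = padicNorm p n) {v w : K⟦X⟧ × K⟦X⟧} {l c u : K⟦X⟧}
    (hv : D v = l • v) (hh : v.2 ∈ boundedPowerSeries K) (hw : w.2 ∈ boundedPowerSeries K)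
    (he : ((X, 1) : K⟦X⟧ × K⟦X⟧) = c • w) (hu : u ∈ boundedPowerSeries K)
    (hWu : wronskian v w * u = 1) : False := by
  have hc : c * w.2 = 1 := (congrArg Prod.snd he).symm
  refine false_of_D_eq_smul_of_wronskian_X_one_mul_eq_one hp2 hK hv hh (mul_mem hw hu) ?_
  rw [he, wronskian_smul_right]
  linear_combination wronskian v w * u * hc + hWu

end DiffModuleM

open DiffModuleM

theorem M_indecomposable_general (p : ℕ) (hp : p.Prime) (hp2 : p ≠ 2)
    (K : Type*) [NormedField K]
    (hK : ∀ q : ℚ, ‖(q : K)‖ = (padicNorm p q : ℝ)) :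
    let Bdd : PowerSeries K → Prop := fun f =>
      BddAbove (Set.range fun i : ℕ => ‖PowerSeries.coeff i f‖)
    let D : PowerSeries K × PowerSeries K → PowerSeries K × PowerSeries K := fun v =>
      (PowerSeries.derivative K v.1 - v.2,
        v.1 + PowerSeries.derivative K v.2 - PowerSeries.X * v.2)
    ¬ ∃ (v₁ v₂ : PowerSeries K × PowerSeries K) (l₁ l₂ : PowerSeries K),
      Bdd v₁.1 ∧ Bdd v₁.2 ∧ Bdd v₂.1 ∧ Bdd v₂.2 ∧ Bdd l₁ ∧ Bdd l₂ ∧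
      D v₁ = (l₁ * v₁.1, l₁ * v₁.2) ∧ D v₂ = (l₂ * v₂.1, l₂ * v₂.2) ∧
      (∀ w : PowerSeries K × PowerSeries K, Bdd w.1 → Bdd w.2 →
        ∃ c₁ c₂ : PowerSeries K, Bdd c₁ ∧ Bdd c₂ ∧
          w = (c₁ * v₁.1 + c₂ * v₂.1, c₁ * v₁.2 + c₂ * v₂.2)) ∧
      (∀ c₁ c₂ : PowerSeries K,
        (c₁ * v₁.1 + c₂ * v₂.1, c₁ * v₁.2 + c₂ * v₂.2) = ((0 : PowerSeries K), (0 : PowerSeries K)) →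
        c₁ = 0 ∧ c₂ = 0) := by
  intro Bdd D
  rintro ⟨v₁, v₂, l₁, l₂, hg₁, hh₁, hg₂, hh₂, -, -, hD₁, hD₂, hspan, hindep⟩
  have : Fact p.Prime := ⟨hp⟩
  have hK' : ∀ n : ℕ, ‖(n : K)‖ = padicNorm p n := fun n => by simpa using hK n
  have := isUltrametricDist_of_norm_natCast_eq_padicNorm hK'
  obtain ⟨u, hu, hWu⟩ := exists_mul_wronskian_eq_one (S := boundedPowerSeries K) hspan
  obtain ⟨c₁, c₂, hc₁, hc₂, he⟩ := hspan (X, 1) (X_mem_boundedPowerSeries K)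
    (one_mem (boundedPowerSeries K))
  change ((X, 1) : K⟦X⟧ × K⟦X⟧) = c₁ • v₁ + c₂ • v₂ at he
  obtain ⟨hz₁, hz₂⟩ := D_smul_eq_zero_of_D_add_eq_zero hD₁ hD₂ hindep (he ▸ D_X_one)
  have hN : wronskian (c₁ • v₁) (c₂ • v₂) = 0 :=
    eq_zero_of_derivative_eq_X_mul hp2 hK'
      (wronskian_mem (S := boundedPowerSeries K) (mul_mem hc₁ hg₁) (mul_mem hc₁ hh₁)
        (mul_mem hc₂ hg₂) (mul_mem hc₂ hh₂))
      (derivative_wronskian_of_D_eq_zero hz₁ hz₂)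
  obtain h₁ | h₂ | hW : c₁ = 0 ∨ c₂ = 0 ∨ wronskian v₁ v₂ = 0 := by
    rwa [wronskian_smul_left, wronskian_smul_right, mul_eq_zero, mul_eq_zero] at hN
  · exact false_of_X_one_eq_smul hp2 hK' hD₁ hh₁ hh₂ (by rwa [h₁, zero_smul, zero_add] at he)
      hu hWu
  · exact false_of_X_one_eq_smul hp2 hK' hD₂ hh₂ hh₁ (by rwa [h₂, zero_smul, add_zero] at he)
      (neg_mem hu) (by rw [wronskian_swap]; linear_combination hWu)
  · exact right_ne_zero_of_mul_eq_one (mul_comm _ u ▸ hWu) hW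

/-- Let `p ≠ 2` be prime and `K` a complete discretely valued field of
mixed characteristic `(0,p)` (its norm restricts to the `p`-adic norm on `ℚ`). Let `M` be the
rank-two differential module over `K[[t]]₀` (bounded power series) with basis `e₁, e₂` and
`D(e₁) = e₂`, `D(e₂) = -e₁ - t·e₂`, so that on coordinates
`D(g,h) = (g' - h, g + h' - t·h)`. Then `M` is indecomposable: there is no decomposition of
`M` as a direct sum of two rank-one differential submodules, i.e. no basis `v₁, v₂` of `M`
over `K[[t]]₀` with `D(vᵢ) = λᵢ·vᵢ` for some `λᵢ ∈ K[[t]]₀`. -/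
theorem M_indecomposable (p : ℕ) (hp : p.Prime) (hp2 : p ≠ 2)
    (K : Type*) [NormedField K] [CompleteSpace K]
    (hK : ∀ q : ℚ, ‖(q : K)‖ = (padicNorm p q : ℝ))
    (hdisc : ∃ π : K, 0 < ‖π‖ ∧ ‖π‖ < 1 ∧ ∀ x : K, x ≠ 0 → ∃ n : ℤ, ‖x‖ = ‖π‖ ^ n) :
    let Bdd : PowerSeries K → Prop := fun f =>
      BddAbove (Set.range fun i : ℕ => ‖PowerSeries.coeff i f‖)
    let D : PowerSeries K × PowerSeries K → PowerSeries K × PowerSeries K := fun v =>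
      (PowerSeries.derivative K v.1 - v.2,
        v.1 + PowerSeries.derivative K v.2 - PowerSeries.X * v.2)
    ¬ ∃ (v₁ v₂ : PowerSeries K × PowerSeries K) (l₁ l₂ : PowerSeries K),
      Bdd v₁.1 ∧ Bdd v₁.2 ∧ Bdd v₂.1 ∧ Bdd v₂.2 ∧ Bdd l₁ ∧ Bdd l₂ ∧
      D v₁ = (l₁ * v₁.1, l₁ * v₁.2) ∧ D v₂ = (l₂ * v₂.1, l₂ * v₂.2) ∧
      (∀ w : PowerSeries K × PowerSeries K, Bdd w.1 → Bdd w.2 →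
        ∃ c₁ c₂ : PowerSeries K, Bdd c₁ ∧ Bdd c₂ ∧
          w = (c₁ * v₁.1 + c₂ * v₂.1, c₁ * v₁.2 + c₂ * v₂.2)) ∧
      (∀ c₁ c₂ : PowerSeries K,
        (c₁ * v₁.1 + c₂ * v₂.1, c₁ * v₁.2 + c₂ * v₂.2) = ((0 : PowerSeries K), (0 : PowerSeries K)) →
        c₁ = 0 ∧ c₂ = 0) :=
  M_indecomposable_general p hp hp2 K hK
end

section
/- Define φ: ℝ≥0 → ℝ≥0 by φ(s) = min{s^p, s/p} (so φ(s) = s/p for s ≤ ω and φ(s) = s^p for s ≥ ω, where ω = p^{-1/(p-1)}). Then φ is strictly increasing on (0,∞), and for finite multisets S, S' of positive reals, if φ(S) = φ(S') then S = S', where φ(S) is the multiset union over s ∈ S of {s^p together with p-1 copies of ω^p} if s > ω, and {p copies of s/p} if s ≤ ω. -/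
/-!
The multiset `Φ S` is read off in two pieces. Since `ω ^ p = ω / p`, every element of `Φ S`
coming from some `s ≤ ω` is at most `ω ^ p`, as are the padding copies of `ω ^ p`; so the
elements of `Φ S` strictly above `ω ^ p` are exactly the `p`-th powers of the elements of `S`
above `ω`, which determines that part of `S`. Cancelling its contribution leaves `p` copies of
`s / p` for each remaining `s`, from which the rest of `S` is recovered.
-/

open Multiset

theorem StrictMonoOn.min {α β : Type*} [Preorder α] [LinearOrder β] {f g : α → β} {s : Set α}
    (hf : StrictMonoOn f s) (hg : StrictMonoOn g s) :
    StrictMonoOn (fun x => min (f x) (g x)) s :=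
  fun _ ha _ hb hab => min_lt_min (hf ha hb hab) (hg ha hb hab)

theorem Real.rpow_neg_one_div_sub_one_pow {x : ℝ} (hx : 0 < x) {n : ℕ} (hn : (n : ℝ) ≠ 1) :
    (x ^ (-1 / (n - 1 : ℝ))) ^ n = x ^ (-1 / (n - 1 : ℝ)) / x := by
  have hn' : (n : ℝ) - 1 ≠ 0 := sub_ne_zero.2 hn
  rw [← Real.rpow_natCast, ← Real.rpow_mul hx.le, ← Real.rpow_sub_one hx.ne']
  congr 1
  field_simp
  ring

theorem Multiset.eq_of_map_eq_map_of_injOn {α β : Type*} [Nonempty α] {f : α → β} {s : Set α}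
    (hf : s.InjOn f) {S T : Multiset α} (hS : ∀ a ∈ S, a ∈ s) (hT : ∀ a ∈ T, a ∈ s)
    (h : S.map f = T.map f) : S = T := by
  have hinv : ∀ U : Multiset α, (∀ a ∈ U, a ∈ s) → (U.map f).map (Function.invFunOn f s) = U := by
    intro U hU
    rw [map_map]
    exact (map_congr rfl fun a ha => hf.leftInvOn_invFunOn (hU a ha)).trans (map_id' U)
  rw [← hinv S hS, ← hinv T hT, h]

theorem Multiset.bind_replicate_eq_nsmul_map {α β : Type*} (S : Multiset α) (n : ℕ)
    (f : α → β) : S.bind (fun a => replicate n (f a)) = n • S.map f := by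
  induction S using Multiset.induction_on with
  | empty => simp
  | cons a S ih => rw [cons_bind, ih, map_cons, ← singleton_add, nsmul_add, nsmul_singleton]

section PhiMultiset

variable {p : ℕ} {ω : ℝ}

noncomputable def phiMultiset (p : ℕ) (ω : ℝ) (S : Multiset ℝ) : Multiset ℝ :=
  S.bind fun s =>
    if ω < s then s ^ p ::ₘ replicate (p - 1) (ω ^ p) else replicate p (s / p)

theorem phiMultiset_add (S T : Multiset ℝ) :
    phiMultiset p ω (S + T) = phiMultiset p ω S + phiMultiset p ω T :=
  add_bind _ _ _

theorem phiMultiset_of_forall_le {S : Multiset ℝ} (hS : ∀ s ∈ S, s ≤ ω) :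
    phiMultiset p ω S = p • S.map (· / (p : ℝ)) := by
  rw [← bind_replicate_eq_nsmul_map]
  exact bind_congr fun s hs => if_neg (hS s hs).not_gt

theorem filter_pow_lt_phiMultiset (hp : p ≠ 0) (hω : 0 ≤ ω) (hωp : ω ^ p = ω / p)
    (S : Multiset ℝ) :
    (phiMultiset p ω S).filter (ω ^ p < ·) = (S.filter (ω < ·)).map (· ^ p) := by
  rw [phiMultiset, filter_bind, filter_eq_bind, map_bind]
  refine bind_congr fun s _ => ?_
  split_ifs with hs
  · have hsp : ω ^ p < s ^ p := pow_lt_pow_left₀ hs hω hp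
    rw [filter_cons_of_pos _ hsp, filter_eq_nil.2 fun b hb => by simp [eq_of_mem_replicate hb]]
    rfl
  · refine filter_eq_nil.2 fun b hb => ?_
    rw [eq_of_mem_replicate hb, hωp, not_lt]
    gcongr
    exact not_lt.1 hs

theorem phiMultiset_injective (hp : p ≠ 0) (hω : 0 ≤ ω) (hωp : ω ^ p = ω / p) :
    Function.Injective (phiMultiset p ω) := by
  intro S T h
  have hbig : S.filter (ω < ·) = T.filter (ω < ·) := by
    have hpow := congrArg (filter (ω ^ p < ·)) h
    rw [filter_pow_lt_phiMultiset hp hω hωp, filter_pow_lt_phiMultiset hp hω hωp] at hpow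
    refine eq_of_map_eq_map_of_injOn (s := Set.Ioi ω) ?_ (fun a ha => (mem_filter.1 ha).2)
      (fun a ha => (mem_filter.1 ha).2) hpow
    exact fun a ha b hb => (pow_left_inj₀ (hω.trans ha.le) (hω.trans hb.le) hp).1
  have hsmall : S.filter (¬ω < ·) = T.filter (¬ω < ·) := by
    have hrest := h
    rw [← filter_add_not (ω < ·) S, ← filter_add_not (ω < ·) T, phiMultiset_add,
      phiMultiset_add, hbig, add_right_inj,
      phiMultiset_of_forall_le fun s hs => not_lt.1 (mem_filter.1 hs).2,
      phiMultiset_of_forall_le fun s hs => not_lt.1 (mem_filter.1 hs).2] at hrest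
    have hp' : (p : ℝ) ≠ 0 := Nat.cast_ne_zero.2 hp
    exact map_injective (fun a b => (div_left_inj' hp').1) (nsmul_right_injective hp hrest)
  rw [← filter_add_not (ω < ·) S, ← filter_add_not (ω < ·) T, hbig, hsmall]

end PhiMultiset

/-- Let `p` be a prime, `ω = p^(-1/(p-1)) ∈ (0,1)`, and
`φ(s) = min(s^p, s/p)` (so `φ(s) = s/p` for `s ≤ ω` and `φ(s) = s^p` for `s ≥ ω`).
Then `φ` is strictly increasing on `(0,∞)`, and the induced map on finite multisets of
positive reals, sending `s` to `{s^p}` together with `p-1` copies of `ω^p` if `s > ω`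
and to `p` copies of `s/p` if `s ≤ ω`, is injective. -/
theorem phi_strictMono_and_multiset_injective (p : ℕ) (hp : p.Prime) :
    let ω : ℝ := (p : ℝ) ^ (-(1 : ℝ) / (p - 1))
    let φ : ℝ → ℝ := fun s => min (s ^ p) (s / p)
    let Φ : Multiset ℝ → Multiset ℝ := fun S =>
      S.bind fun s =>
        if ω < s then s ^ p ::ₘ Multiset.replicate (p - 1) (ω ^ p)
        else Multiset.replicate p (s / p)
    StrictMonoOn φ (Set.Ioi (0 : ℝ)) ∧
    ∀ S S' : Multiset ℝ, (∀ s ∈ S, 0 < s) → (∀ s ∈ S', 0 < s) →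
      Φ S = Φ S' → S = S' := by
  intro ω φ Φ
  have hp_pos : (0 : ℝ) < p := Nat.cast_pos.2 hp.pos
  have hp_ne_one : (p : ℝ) ≠ 1 := Nat.cast_ne_one.2 hp.ne_one
  have hω : 0 ≤ ω := Real.rpow_nonneg hp_pos.le _
  have hωp : ω ^ p = ω / p := Real.rpow_neg_one_div_sub_one_pow hp_pos hp_ne_one
  refine ⟨StrictMonoOn.min ?_ ?_, fun S S' _ _ h => phiMultiset_injective hp.ne_zero hω hωp h⟩
  · exact fun x hx y _ hxy => pow_lt_pow_left₀ hxy (le_of_lt hx) hp.ne_zero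
  · exact fun x _ y _ hxy => div_lt_div_of_pos_right hxy hp_pos
end
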